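/- arXiv:1705.07684 — 3 statements merged into one kernel-verified Lean document; each statement's English description precedes it below -/
import Mathlib

section
/- Let R > 0 and let f : [0, R) → ℝ be continuously differentiable with f(0) = 0, f'(0) = −1, and f' strictly increasing; let ν := sup{t ∈ [0, R) : f'(t) < 0} and n_f(t) := t − f(t)/f'(t). Let constants ϑ, ω₁, ω₂, λ satisfy 0 ≤ ϑ < 1, 0 ≤ ω₂ < ω₁, ω₁ϑ + ω₂ < 1, and 0 ≤ λ < (1 − ω₂ − ω₁ϑ)/(ω₁(1+ϑ)). Define ρ := sup{δ ∈ (0, ν) : ω₁(1+ϑ)(1+λ)(f(t)/(t f'(t)) − 1) + ω₁[(1+ϑ)λ + ϑ] + ω₂ < 1 for all t ∈ (0, δ)}. Then ρ > 0 and, for every t ∈ (0, ρ), 0 < ω₁(1+ϑ)(1+λ)|n_f(t)| + (ω₁[(1+ϑ)λ + ϑ] + ω₂) t < t. -/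
/-! Near `0` the quotient `f t / (t f'(t))` tends to `f'(0) / f'(0) = 1`, so the defining inequality of `ρ`
holds on a right neighbourhood of `0`, which gives `ρ > 0`. For `0 < t < ρ` we have `f'(t) < 0`, and
strict monotonicity of `f'` with the mean value theorem gives `f(t) < t f'(t)`; hence `n_f(t) < 0` and
`|n_f(t)| = t (f(t)/(t f'(t)) - 1) > 0`, so the bound to prove is `t` times the defining inequality. -/

open Set Filter Topology

theorem Real.exists_lt_of_lt_sSup_of_nonneg {S : Set ℝ} {t : ℝ} (ht0 : 0 ≤ t) (ht : t < sSup S) :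
    ∃ s ∈ S, t < s := by
  refine exists_lt_of_lt_csSup (nonempty_iff_ne_empty.2 fun hS => ?_) ht
  rw [hS, Real.sSup_empty] at ht
  linarith

theorem sub_lt_mul_deriv_of_strictMonoOn {f f' : ℝ → ℝ} {a b : ℝ} (hab : a < b)
    (hf : ∀ x ∈ Icc a b, HasDerivWithinAt f (f' x) (Icc a b) x)
    (hf' : StrictMonoOn f' (Icc a b)) : f b - f a < (b - a) * f' b := by
  obtain ⟨c, hc, hslope⟩ := exists_hasDerivAt_eq_slope f f' hab
    (fun x hx => (hf x hx).continuousWithinAt)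
    (fun x hx => (hf x (Ioo_subset_Icc_self hx)).hasDerivAt (Icc_mem_nhds hx.1 hx.2))
  have hlt : f' c < f' b := hf' (Ioo_subset_Icc_self hc) (right_mem_Icc.2 hab.le) hc.2
  rw [hslope, div_lt_iff₀ (sub_pos.2 hab)] at hlt
  linarith

theorem tendsto_div_mul_deriv_nhdsGT {f f' : ℝ → ℝ} (hf : HasDerivWithinAt f (f' 0) (Ioi 0) 0)
    (hf' : ContinuousWithinAt f' (Ioi 0) 0) (hf0 : f 0 = 0) (hd : f' 0 ≠ 0) :
    Tendsto (fun t => f t / (t * f' t)) (𝓝[>] 0) (𝓝 1) := by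
  have hslope := (hasDerivWithinAt_iff_tendsto_slope' (lt_irrefl 0)).1 hf
  rw [← div_self hd]
  refine (hslope.div hf' hd).congr fun t => ?_
  simp only [slope_fun_def, hf0, vsub_eq_sub, sub_zero, smul_eq_mul, Pi.div_apply, div_div, inv_mul_eq_div]

theorem sSup_setOf_neg_pos {g : ℝ → ℝ} {R : ℝ} (hR : 0 < R) (hg : ContinuousWithinAt g (Ioi 0) 0)
    (hg0 : g 0 < 0) : 0 < sSup {t | t ∈ Ico 0 R ∧ g t < 0} := by
  obtain ⟨t, ht, hgt⟩ := (Eventually.and (Ioo_mem_nhdsGT hR)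
    (hg.eventually_lt_const hg0)).exists
  exact ht.1.trans_le (le_csSup ⟨R, fun s hs => hs.1.2.le⟩ ⟨Ioo_subset_Ico_self ht, hgt⟩)

theorem neg_of_lt_sSup_setOf_neg {g : ℝ → ℝ} {R t : ℝ} (hg : MonotoneOn g (Ico 0 R)) (ht0 : 0 ≤ t)
    (ht : t < sSup {s | s ∈ Ico 0 R ∧ g s < 0}) : t < R ∧ g t < 0 := by
  obtain ⟨s, ⟨hs, hgs⟩, hts⟩ := Real.exists_lt_of_lt_sSup_of_nonneg ht0 ht
  have htR : t < R := hts.trans hs.2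
  exact ⟨htR, (hg ⟨ht0, htR⟩ hs hts.le).trans_lt hgs⟩

section InitialSegment

variable {P : ℝ → Prop} {ν : ℝ}

theorem sSup_initialSegment_pos (hν : 0 < ν) (hP : ∀ᶠ t in 𝓝[>] 0, P t) :
    0 < sSup {δ | δ ∈ Ioo 0 ν ∧ ∀ t ∈ Ioo 0 δ, P t} := by
  obtain ⟨ε, hε, hεP⟩ := mem_nhdsGT_iff_exists_Ioo_subset.1 hP
  have hδ : min ε (ν / 2) ∈ {δ | δ ∈ Ioo 0 ν ∧ ∀ t ∈ Ioo 0 δ, P t} :=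
    ⟨⟨lt_min hε (half_pos hν), (min_le_right _ _).trans_lt (half_lt_self hν)⟩,
      fun t ht => hεP ⟨ht.1, ht.2.trans_le (min_le_left _ _)⟩⟩
  exact hδ.1.1.trans_le (le_csSup ⟨ν, fun δ hδ => hδ.1.2.le⟩ hδ)

theorem of_mem_Ioo_sSup_initialSegment {t : ℝ}
    (ht : t ∈ Ioo 0 (sSup {δ | δ ∈ Ioo 0 ν ∧ ∀ t ∈ Ioo 0 δ, P t})) : t < ν ∧ P t := by
  obtain ⟨δ, ⟨hδν, hδP⟩, htδ⟩ := Real.exists_lt_of_lt_sSup_of_nonneg ht.1.le ht.2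
  exact ⟨htδ.trans hδν.2, hδP t ⟨ht.1, htδ⟩⟩

end InitialSegment

theorem abs_sub_div_eq_mul {t a b : ℝ} (ht : 0 < t) (hb : b < 0) (hab : a < t * b) :
    |t - a / b| = t * (a / (t * b) - 1) := by
  have htab : t < a / b := (lt_div_iff_of_neg hb).2 hab
  rw [abs_of_neg (sub_neg.2 htab)]
  field_simp
  ring

theorem stmt_3_general (R : ℝ) (hR : 0 < R) (f f' : ℝ → ℝ)
    (hderiv : ∀ t ∈ Set.Ico 0 R, HasDerivWithinAt f (f' t) (Set.Ico 0 R) t)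
    (hcont : ContinuousOn f' (Set.Ico 0 R))
    (h1a : f 0 = 0) (h1b : f' 0 = -1)
    (h2 : StrictMonoOn f' (Set.Ico 0 R))
    (ν : ℝ) (hν : ν = sSup {t | t ∈ Set.Ico 0 R ∧ f' t < 0})
    (nf : ℝ → ℝ) (hnf : ∀ t, nf t = t - f t / f' t)
    (ϑ ω₁ ω₂ lam : ℝ)
    (hϑ0 : 0 ≤ ϑ) (hω₂0 : 0 ≤ ω₂) (hω₁₂ : ω₂ < ω₁)
    (hlam0 : 0 ≤ lam) (hlam : lam < (1 - ω₂ - ω₁ * ϑ) / (ω₁ * (1 + ϑ)))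
    (ρ : ℝ)
    (hρ : ρ = sSup {δ | δ ∈ Set.Ioo 0 ν ∧ ∀ t ∈ Set.Ioo 0 δ,
      ω₁ * (1 + ϑ) * (1 + lam) * (f t / (t * f' t) - 1)
        + ω₁ * ((1 + ϑ) * lam + ϑ) + ω₂ < 1}) :
    0 < ρ ∧ ∀ t ∈ Set.Ioo 0 ρ,
      0 < ω₁ * (1 + ϑ) * (1 + lam) * |nf t| + (ω₁ * ((1 + ϑ) * lam + ϑ) + ω₂) * t ∧
      ω₁ * (1 + ϑ) * (1 + lam) * |nf t| + (ω₁ * ((1 + ϑ) * lam + ϑ) + ω₂) * t < t := by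
  have hω₁ : 0 < ω₁ := hω₂0.trans_lt hω₁₂
  have hK : 0 < ω₁ * (1 + ϑ) * (1 + lam) := by positivity
  have hC0 : 0 ≤ ω₁ * ((1 + ϑ) * lam + ϑ) + ω₂ := by positivity
  have hC1 : ω₁ * ((1 + ϑ) * lam + ϑ) + ω₂ < 1 := by
    have := (lt_div_iff₀ (by positivity)).1 hlam
    linarith
  have hnhds : Ico 0 R ∈ 𝓝[>] (0 : ℝ) := Ico_mem_nhdsGT hR
  have hcont0 := (hcont 0 ⟨le_rfl, hR⟩).mono_of_mem_nhdsWithin hnhds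
  have hν0 : 0 < ν := hν ▸ sSup_setOf_neg_pos hR hcont0 (h1b ▸ neg_one_lt_zero)
  have hlim := tendsto_div_mul_deriv_nhdsGT ((hderiv 0 ⟨le_rfl, hR⟩).mono_of_mem_nhdsWithin hnhds)
    hcont0 h1a (h1b ▸ neg_one_lt_zero.ne)
  have hP : ∀ᶠ t in 𝓝[>] 0, ω₁ * (1 + ϑ) * (1 + lam) * (f t / (t * f' t) - 1)
      + ω₁ * ((1 + ϑ) * lam + ϑ) + ω₂ < 1 := by
    refine Tendsto.eventually_lt_const ?_ ((((hlim.sub_const 1).const_mul _).add_const _).add_const _)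
    simpa only [sub_self, mul_zero, zero_add] using hC1
  refine ⟨hρ ▸ sSup_initialSegment_pos hν0 hP, fun t ht => ?_⟩
  obtain ⟨htν, hPt⟩ := of_mem_Ioo_sSup_initialSegment (hρ ▸ ht)
  obtain ⟨htR, hf't⟩ := neg_of_lt_sSup_setOf_neg h2.monotoneOn ht.1.le (hν ▸ htν)
  have hft : f t < t * f' t := by
    simpa [h1a] using sub_lt_mul_deriv_of_strictMonoOn ht.1
      (fun x hx => (hderiv x ⟨hx.1, hx.2.trans_lt htR⟩).mono (Icc_subset_Ico_right htR))
      (h2.mono (Icc_subset_Ico_right htR))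
  have hr : 0 < f t / (t * f' t) - 1 :=
    sub_pos.2 ((one_lt_div_of_neg (mul_neg_of_pos_of_neg ht.1 hf't)).2 hft)
  rw [hnf, abs_sub_div_eq_mul ht.1 hf't hft]
  constructor
  · exact add_pos_of_pos_of_nonneg (mul_pos hK (mul_pos ht.1 hr)) (mul_nonneg hC0 ht.1.le)
  · nlinarith [mul_lt_mul_of_pos_left hPt ht.1]

theorem stmt_3 (R : ℝ) (hR : 0 < R) (f f' : ℝ → ℝ)
    (hderiv : ∀ t ∈ Set.Ico 0 R, HasDerivWithinAt f (f' t) (Set.Ico 0 R) t)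
    (hcont : ContinuousOn f' (Set.Ico 0 R))
    (h1a : f 0 = 0) (h1b : f' 0 = -1)
    (h2 : StrictMonoOn f' (Set.Ico 0 R))
    (ν : ℝ) (hν : ν = sSup {t | t ∈ Set.Ico 0 R ∧ f' t < 0})
    (nf : ℝ → ℝ) (hnf : ∀ t, nf t = t - f t / f' t)
    (ϑ ω₁ ω₂ lam : ℝ)
    (hϑ0 : 0 ≤ ϑ) (hϑ1 : ϑ < 1) (hω₂0 : 0 ≤ ω₂) (hω₁₂ : ω₂ < ω₁)
    (hωϑ : ω₁ * ϑ + ω₂ < 1)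
    (hlam0 : 0 ≤ lam) (hlam : lam < (1 - ω₂ - ω₁ * ϑ) / (ω₁ * (1 + ϑ)))
    (ρ : ℝ)
    (hρ : ρ = sSup {δ | δ ∈ Set.Ioo 0 ν ∧ ∀ t ∈ Set.Ioo 0 δ,
      ω₁ * (1 + ϑ) * (1 + lam) * (f t / (t * f' t) - 1)
        + ω₁ * ((1 + ϑ) * lam + ϑ) + ω₂ < 1}) :
    0 < ρ ∧ ∀ t ∈ Set.Ioo 0 ρ,
      0 < ω₁ * (1 + ϑ) * (1 + lam) * |nf t| + (ω₁ * ((1 + ϑ) * lam + ϑ) + ω₂) * t ∧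
      ω₁ * (1 + ϑ) * (1 + lam) * |nf t| + (ω₁ * ((1 + ϑ) * lam + ϑ) + ω₂) * t < t :=
  stmt_3_general R hR f f' hderiv hcont h1a h1b h2 ν hν nf hnf ϑ ω₁ ω₂ lam hϑ0 hω₂0 hω₁₂ hlam0 hlam
    ρ hρ
end

section
/- In the majorant setting with x ∈ C ∩ B(x*, σ), x ≠ x*, invertible M with ‖M⁻¹F'(x)‖ ≤ ω₁ and ‖M⁻¹F'(x) − I‖ ≤ ω₂, residual r with ‖P r‖ ≤ η‖P F(x)‖ and η·‖(P F'(x))⁻¹‖·‖P F'(x)‖ ≤ ϑ for some invertible matrix P and η ≥ 0, and 0 ≤ θ ≤ λ²/2: if x⁺ ∈ C satisfies ‖x⁺ − x*‖ ≤ ‖x − M⁻¹(F(x) − r) − x*‖ + √(2θ)·‖M⁻¹(F(x) − r)‖, then ‖x⁺ − x*‖ ≤ ω₁(1+ϑ)(1+√(2θ))|n_f(‖x − x*‖)| + (ω₁[(1+ϑ)√(2θ) + ϑ] + ω₂)‖x − x*‖ < ‖x − x*‖. -/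
/-!
With `t = ‖x - x*‖`, the majorant condition at `τ = 0` gives `‖F'(x*)⁻¹ F'(x) - 1‖ ≤ f'(t) + 1 < 1`,
so by the Banach lemma `F'(x)` is invertible and `‖F'(x)⁻¹ F'(x*)‖ ≤ 1 / |f'(t)|`. Comparing
`τ ↦ F'(x*)⁻¹ (F(x* + τ(x - x*)) - τ F'(x)(x - x*))` with `τ ↦ τ t f'(t) - f(τ t)` by the fencing
theorem bounds the linearization error by `t f'(t) - f(t)`, hence `F'(x)⁻¹` of it by `|n_f(t)|`.
Writing the inexact step through `F'(x)⁻¹` turns the hypotheses on `M`, `P`, `r` into the stated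
bound, and the defining property of `ρ` at `t` makes that bound smaller than `t`.
-/

open Set

-- Since `sSup ∅ = 0` in `ℝ`, the hypothesis `0 ≤ t` is what forces `S` to be nonempty.
theorem Real.exists_mem_lt_of_lt_sSup {S : Set ℝ} {t : ℝ} (ht : 0 ≤ t) (h : t < sSup S) :
    ∃ s ∈ S, t < s := by
  rcases S.eq_empty_or_nonempty with rfl | hS
  · rw [Real.sSup_empty] at h
    exact absurd h ht.not_gt
  · exact exists_lt_of_lt_csSup hS h

section RingInverse

variable {𝕜 E : Type*} [NontriviallyNormedField 𝕜] [NormedAddCommGroup E] [NormedSpace 𝕜 E]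

theorem ContinuousLinearMap.apply_ringInverse_apply {T : E →L[𝕜] E} (hT : IsUnit T) (v : E) :
    T (Ring.inverse T v) = v :=
  congrArg (fun L : E →L[𝕜] E => L v) (Ring.mul_inverse_cancel T hT)

theorem ContinuousLinearMap.ringInverse_apply_apply {T : E →L[𝕜] E} (hT : IsUnit T) (v : E) :
    Ring.inverse T (T v) = v :=
  congrArg (fun L : E →L[𝕜] E => L v) (Ring.inverse_mul_cancel T hT)

theorem ContinuousLinearMap.norm_ringInverse_one_sub_le [CompleteSpace E] {D : E →L[𝕜] E}
    (h : ‖D‖ < 1) : ‖Ring.inverse (1 - D)‖ ≤ (1 - ‖D‖)⁻¹ := by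
  rw [← geom_series_eq_inverse D h]
  have h1 : ‖(1 : E →L[𝕜] E)‖ ≤ 1 := ContinuousLinearMap.norm_id_le
  linarith [tsum_geometric_le_of_norm_lt_one D h]

theorem ContinuousLinearMap.isUnit_and_norm_ringInverse_mul_le [CompleteSpace E]
    {T S : E →L[𝕜] E} (hT : IsUnit T) (h : ‖Ring.inverse T * S - 1‖ < 1) :
    IsUnit S ∧ ‖Ring.inverse S * T‖ ≤ (1 - ‖Ring.inverse T * S - 1‖)⁻¹ := by
  have hD : ‖1 - Ring.inverse T * S‖ < 1 := by rwa [norm_sub_rev]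
  have hJ : IsUnit (Ring.inverse T * S) := by
    simpa only [sub_sub_cancel] using isUnit_one_sub_of_norm_lt_one hD
  have hS : S = T * (Ring.inverse T * S) := (Ring.mul_inverse_cancel_left T S hT).symm
  refine ⟨hS ▸ hT.mul hJ, ?_⟩
  have hST : Ring.inverse S * T = Ring.inverse (1 - (1 - Ring.inverse T * S)) := by
    rw [sub_sub_cancel]
    nth_rw 1 [hS]
    rw [Ring.inverse_mul (Or.inl hT), mul_assoc, Ring.inverse_mul_cancel T hT, mul_one]
  rw [hST, norm_sub_rev _ 1]
  exact norm_ringInverse_one_sub_le hD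

theorem ContinuousLinearMap.norm_ringInverse_apply_le_of_precond {T P : E →L[𝕜] E}
    (hT : IsUnit T) (hP : IsUnit P) {η ϑ : ℝ} (hη : 0 ≤ η) {r v : E}
    (hres : ‖P r‖ ≤ η * ‖P v‖) (hcond : η * (‖Ring.inverse (P.comp T)‖ * ‖P.comp T‖) ≤ ϑ) :
    ‖Ring.inverse T r‖ ≤ ϑ * ‖Ring.inverse T v‖ := by
  have hQP : Ring.inverse (P.comp T) * P = Ring.inverse T := by
    rw [← ContinuousLinearMap.mul_def, Ring.inverse_mul (Or.inr hT), mul_assoc,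
      Ring.inverse_mul_cancel P hP, mul_one]
  have hPv : P v = P.comp T (Ring.inverse T v) := by
    rw [comp_apply, apply_ringInverse_apply hT]
  set Q := Ring.inverse (P.comp T)
  calc ‖Ring.inverse T r‖ = ‖Q (P r)‖ := by rw [← hQP]; rfl
    _ ≤ ‖Q‖ * (η * (‖P.comp T‖ * ‖Ring.inverse T v‖)) := by
      refine (Q.le_opNorm _).trans (mul_le_mul_of_nonneg_left (hres.trans ?_) (norm_nonneg _))
      exact mul_le_mul_of_nonneg_left (hPv ▸ le_opNorm _ _) hη
    _ = η * (‖Q‖ * ‖P.comp T‖) * ‖Ring.inverse T v‖ := by ring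
    _ ≤ ϑ * ‖Ring.inverse T v‖ := mul_le_mul_of_nonneg_right hcond (norm_nonneg _)

theorem ContinuousLinearMap.norm_inexact_newton_step_le {M T : E →L[𝕜] E} (hT : IsUnit T)
    {u v r : E} {ω₁ ω₂ ϑ e c : ℝ} (hK : ‖(Ring.inverse M).comp T‖ ≤ ω₁)
    (hK1 : ‖(Ring.inverse M).comp T - 1‖ ≤ ω₂) (hw : ‖Ring.inverse T (v - T u)‖ ≤ e)
    (hr : ‖Ring.inverse T r‖ ≤ ϑ * ‖Ring.inverse T v‖) (hϑ : 0 ≤ ϑ) (hc : 0 ≤ c) :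
    ‖u - Ring.inverse M (v - r)‖ + c * ‖Ring.inverse M (v - r)‖ ≤
      ω₁ * (1 + ϑ) * (1 + c) * e + (ω₁ * ((1 + ϑ) * c + ϑ) + ω₂) * ‖u‖ := by
  set K := (Ring.inverse M).comp T
  set N := Ring.inverse T
  have hω₁ : 0 ≤ ω₁ := (norm_nonneg _).trans hK
  have hMK : ∀ z, Ring.inverse M z = K (N z) := fun z => by
    rw [comp_apply, apply_ringInverse_apply hT]
  have hKle : ∀ {z : E} {b : ℝ}, ‖N z‖ ≤ b → ‖Ring.inverse M z‖ ≤ ω₁ * b := fun hz =>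
    hMK _ ▸ (K.le_opNorm _).trans (mul_le_mul hK hz (norm_nonneg _) hω₁)
  have hNv : N v = N (v - T u) + u := by
    rw [map_sub, ringInverse_apply_apply hT, sub_add_cancel]
  have hNv_le : ‖N v‖ ≤ e + ‖u‖ := hNv ▸ (norm_add_le _ _).trans (by linarith)
  have hMr : ‖Ring.inverse M r‖ ≤ ω₁ * (ϑ * (e + ‖u‖)) :=
    hKle (hr.trans (mul_le_mul_of_nonneg_left hNv_le hϑ))
  have hstep : u - Ring.inverse M (v - r) = (u - K u) - K (N (v - T u)) + Ring.inverse M r := by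
    rw [map_sub, hMK v, hNv, map_add]
    abel
  have hKu : ‖u - K u‖ ≤ ω₂ * ‖u‖ := by
    rw [norm_sub_rev]
    exact ((K - 1).le_opNorm u).trans (mul_le_mul_of_nonneg_right hK1 (norm_nonneg u))
  have hKw : ‖K (N (v - T u))‖ ≤ ω₁ * e :=
    (K.le_opNorm _).trans (mul_le_mul hK hw (norm_nonneg _) hω₁)
  calc ‖u - Ring.inverse M (v - r)‖ + c * ‖Ring.inverse M (v - r)‖
      ≤ (ω₂ * ‖u‖ + ω₁ * e + ω₁ * (ϑ * (e + ‖u‖)))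
          + c * (ω₁ * (e + ‖u‖) + ω₁ * (ϑ * (e + ‖u‖))) := by
        gcongr
        · rw [hstep]
          exact (norm_add_le _ _).trans (add_le_add ((norm_sub_le _ _).trans
            (add_le_add hKu hKw)) hMr)
        · rw [map_sub]
          exact (norm_sub_le _ _).trans (add_le_add (hKle hNv_le) hMr)
    _ = ω₁ * (1 + ϑ) * (1 + c) * e + (ω₁ * ((1 + ϑ) * c + ϑ) + ω₂) * ‖u‖ := by ring

end RingInverse

theorem continuousOn_and_hasDerivWithinAt_comp_mul {f f' : ℝ → ℝ} {R t : ℝ}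
    (hf : ∀ s ∈ Ico 0 R, HasDerivWithinAt f (f' s) (Ico 0 R) s) (ht : 0 ≤ t) (htR : t < R) :
    ContinuousOn (fun τ => f (τ * t)) (Icc 0 1) ∧
      ∀ τ ∈ Ico (0 : ℝ) 1, HasDerivWithinAt (fun τ => f (τ * t)) (f' (τ * t) * t) (Ici τ) τ := by
  have hscaled : MapsTo (· * t) (Icc (0 : ℝ) 1) (Ico 0 R) := fun τ hτ =>
    ⟨mul_nonneg hτ.1 ht, (mul_le_of_le_one_left ht hτ.2).trans_lt htR⟩
  have hfc : ContinuousOn f (Ico 0 R) := fun s hs => (hf s hs).continuousWithinAt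
  refine ⟨hfc.comp (continuousOn_id.mul continuousOn_const) hscaled, fun τ hτ => ?_⟩
  have hτt := hscaled (Ico_subset_Icc_self hτ)
  exact ((hf _ hτt).mono_of_mem_nhdsWithin (Ico_mem_nhdsGE_of_mem hτt)).comp τ
    (hasDerivAt_mul_const t).hasDerivWithinAt
    fun s hs => mul_le_mul_of_nonneg_right (mem_Ici.mp hs) ht

theorem norm_map_sub_sub_fderiv_le_of_majorant
    {E G H : Type*} [NormedAddCommGroup E] [NormedSpace ℝ E] [NormedAddCommGroup G]
    [NormedSpace ℝ G] [NormedAddCommGroup H] [NormedSpace ℝ H]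
    {F : E → G} {F' : E → E →L[ℝ] G} (A : G →L[ℝ] H) {x y : E}
    (hF : ∀ τ ∈ Icc (0 : ℝ) 1, HasFDerivAt F (F' (y + τ • (x - y))) (y + τ • (x - y)))
    {f f' : ℝ → ℝ} {R : ℝ} (hf : ∀ s ∈ Ico 0 R, HasDerivWithinAt f (f' s) (Ico 0 R) s)
    (hxR : ‖x - y‖ < R)
    (hmaj : ∀ τ ∈ Icc (0 : ℝ) 1,
      ‖A.comp (F' x - F' (y + τ • (x - y)))‖ ≤ f' ‖x - y‖ - f' (τ * ‖x - y‖)) :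
    ‖A (F x - F y - F' x (x - y))‖ ≤ ‖x - y‖ * f' ‖x - y‖ - f ‖x - y‖ + f 0 := by
  set u := x - y
  set t := ‖u‖
  obtain ⟨hcont, hderiv⟩ := continuousOn_and_hasDerivWithinAt_comp_mul hf (norm_nonneg u) hxR
  have hg : ∀ τ ∈ Icc (0 : ℝ) 1, HasDerivAt
      (fun τ : ℝ => A (F (y + τ • u) - F y - τ • F' x u))
      (A (F' (y + τ • u) u - F' x u)) τ := by
    intro τ hτ
    have hpath : HasDerivAt (fun τ : ℝ => y + τ • u) u τ := by
      simpa using ((hasDerivAt_id τ).smul_const u).const_add y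
    have hFpath := (hF τ hτ).comp_hasDerivAt τ hpath
    refine A.hasFDerivAt.comp_hasDerivAt τ ?_
    convert (hFpath.sub_const (F y)).sub ((hasDerivAt_id τ).smul_const (F' x u)) using 1
    · rfl
    · rw [one_smul]
  have hB : ∀ τ ∈ Ico (0 : ℝ) 1, HasDerivWithinAt
      (fun τ : ℝ => τ * (t * f' t) - f (τ * t) + f 0)
      (t * f' t - f' (τ * t) * t) (Ici τ) τ := fun τ hτ =>
    (((hasDerivAt_mul_const (t * f' t)).hasDerivWithinAt).sub (hderiv τ hτ)).add_const (f 0)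
  have hbound : ∀ τ ∈ Ico (0 : ℝ) 1,
      ‖A (F' (y + τ • u) u - F' x u)‖ ≤ t * f' t - f' (τ * t) * t := by
    intro τ hτ
    calc ‖A (F' (y + τ • u) u - F' x u)‖ = ‖A.comp (F' x - F' (y + τ • u)) u‖ := by
          rw [← norm_neg, ← map_neg]; simp
      _ ≤ (f' t - f' (τ * t)) * t :=
        ((A.comp _).le_opNorm u).trans
          (mul_le_mul_of_nonneg_right (hmaj τ (Ico_subset_Icc_self hτ)) (norm_nonneg u))
      _ = t * f' t - f' (τ * t) * t := by ring
  have hfence := image_norm_le_of_norm_deriv_right_le_deriv_boundary'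
    (fun τ hτ => (hg τ hτ).continuousAt.continuousWithinAt)
    (fun τ hτ => (hg τ (Ico_subset_Icc_self hτ)).hasDerivWithinAt) (by simp)
    (((continuousOn_id.mul continuousOn_const).sub hcont).add continuousOn_const) hB hbound
    (right_mem_Icc.2 zero_le_one)
  simpa [u] using hfence

theorem isUnit_and_norm_newton_error_le_of_majorant
    {E : Type*} [NormedAddCommGroup E] [NormedSpace ℝ E] [CompleteSpace E]
    {F : E → E} {F' : E → E →L[ℝ] E} {xs x : E} (hinv : IsUnit (F' xs)) (hFxs : F xs = 0)
    (hF : ∀ τ ∈ Icc (0 : ℝ) 1, HasFDerivAt F (F' (xs + τ • (x - xs))) (xs + τ • (x - xs)))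
    {f f' : ℝ → ℝ} {R : ℝ} (hf : ∀ s ∈ Ico 0 R, HasDerivWithinAt f (f' s) (Ico 0 R) s)
    (hf0 : f 0 = 0) (hf'0 : f' 0 = -1) (hxR : ‖x - xs‖ < R) (hneg : f' ‖x - xs‖ < 0)
    (hmaj : ∀ τ ∈ Icc (0 : ℝ) 1, ‖(Ring.inverse (F' xs)).comp (F' x - F' (xs + τ • (x - xs)))‖
      ≤ f' ‖x - xs‖ - f' (τ * ‖x - xs‖)) :
    IsUnit (F' x) ∧
      ‖Ring.inverse (F' x) (F x - F' x (x - xs))‖ ≤ f ‖x - xs‖ / f' ‖x - xs‖ - ‖x - xs‖ := by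
  set t := ‖x - xs‖
  set A := Ring.inverse (F' xs)
  have hJ : ‖A * F' x - 1‖ ≤ f' t + 1 := by
    have h0 := hmaj 0 (left_mem_Icc.2 zero_le_one)
    rwa [zero_smul, add_zero, zero_mul, hf'0, sub_neg_eq_add, ContinuousLinearMap.comp_sub,
      ← ContinuousLinearMap.mul_def, ← ContinuousLinearMap.mul_def,
      Ring.inverse_mul_cancel _ hinv] at h0
  obtain ⟨hT, hNA⟩ := ContinuousLinearMap.isUnit_and_norm_ringInverse_mul_le hinv (by linarith)
  have hNA' : ‖Ring.inverse (F' x) * F' xs‖ ≤ (-f' t)⁻¹ :=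
    hNA.trans (inv_anti₀ (by linarith) (by linarith))
  have hlin := norm_map_sub_sub_fderiv_le_of_majorant A hF hf hxR hmaj
  rw [hFxs, sub_zero, hf0, add_zero] at hlin
  refine ⟨hT, ?_⟩
  calc ‖Ring.inverse (F' x) (F x - F' x (x - xs))‖
      = ‖(Ring.inverse (F' x) * F' xs) (A (F x - F' x (x - xs)))‖ := by
        change _ = ‖Ring.inverse (F' x) (F' xs (A _))‖
        rw [ContinuousLinearMap.apply_ringInverse_apply hinv]
    _ ≤ (-f' t)⁻¹ * (t * f' t - f t) :=
        (ContinuousLinearMap.le_opNorm _ _).trans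
          (mul_le_mul hNA' hlin (norm_nonneg _) (inv_nonneg.2 (by linarith)))
    _ = f t / f' t - t := by
        field_simp [hneg.ne]
        ring

theorem newton_error_bound_lt_self {ω₁ ω₂ ϑ lam c t e : ℝ} (hω₁ : 0 ≤ ω₁) (hϑ : 0 ≤ ϑ)
    (ht : 0 < t) (he : 0 ≤ e) (hc : c ≤ lam)
    (hkey : ω₁ * (1 + ϑ) * (1 + lam) * (e / t) + ω₁ * ((1 + ϑ) * lam + ϑ) + ω₂ < 1) :
    ω₁ * (1 + ϑ) * (1 + c) * e + (ω₁ * ((1 + ϑ) * c + ϑ) + ω₂) * t < t := by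
  have hmono : 0 ≤ ω₁ * (1 + ϑ) * (lam - c) * (e + t) := by
    have := sub_nonneg.2 hc
    positivity
  calc ω₁ * (1 + ϑ) * (1 + c) * e + (ω₁ * ((1 + ϑ) * c + ϑ) + ω₂) * t
      ≤ ω₁ * (1 + ϑ) * (1 + lam) * e + (ω₁ * ((1 + ϑ) * lam + ϑ) + ω₂) * t := by
        linear_combination hmono
    _ = t * (ω₁ * (1 + ϑ) * (1 + lam) * (e / t) + ω₁ * ((1 + ϑ) * lam + ϑ) + ω₂) := by
        field_simp
        ring
    _ < t := mul_lt_of_lt_one_right ht hkey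

theorem stmt_9_general (n : ℕ) (Ω : Set (EuclideanSpace ℝ (Fin n)))
    (C : Set (EuclideanSpace ℝ (Fin n)))
    (F : EuclideanSpace ℝ (Fin n) → EuclideanSpace ℝ (Fin n))
    (F' : EuclideanSpace ℝ (Fin n) →
      (EuclideanSpace ℝ (Fin n) →L[ℝ] EuclideanSpace ℝ (Fin n)))
    (hFderiv : ∀ x ∈ Ω, HasFDerivAt F (F' x) x)
    (xs : EuclideanSpace ℝ (Fin n)) (hFxs : F xs = 0)
    (hinv : IsUnit (F' xs))
    (R : ℝ)
    (κ : ℝ) (hκ : κ = sSup {t | t ∈ Set.Ico 0 R ∧ Metric.ball xs t ⊆ Ω})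
    (f f' : ℝ → ℝ)
    (hderiv : ∀ t ∈ Set.Ico 0 R, HasDerivWithinAt f (f' t) (Set.Ico 0 R) t)
    (h1a : f 0 = 0) (h1b : f' 0 = -1)
    (h2 : StrictMonoOn f' (Set.Ico 0 R))
    (hmaj : ∀ τ ∈ Set.Icc (0:ℝ) 1, ∀ x ∈ Metric.ball xs κ,
      ‖(Ring.inverse (F' xs)).comp (F' x - F' (xs + τ • (x - xs)))‖ ≤
        f' ‖x - xs‖ - f' (τ * ‖x - xs‖))
    (ν : ℝ) (hν : ν = sSup {t | t ∈ Set.Ico 0 R ∧ f' t < 0})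
    (ϑ ω₁ ω₂ lam : ℝ)
    (hϑ0 : 0 ≤ ϑ)
    (hlam0 : 0 ≤ lam)
    (ρ : ℝ)
    (hρ : ρ = sSup {δ | δ ∈ Set.Ioo 0 ν ∧ ∀ t ∈ Set.Ioo 0 δ,
      ω₁ * (1 + ϑ) * (1 + lam) * (f t / (t * f' t) - 1)
        + ω₁ * ((1 + ϑ) * lam + ϑ) + ω₂ < 1})
    (σ : ℝ) (hσ : σ = min κ ρ)
    (x : EuclideanSpace ℝ (Fin n)) (hx : x ∈ C ∩ Metric.ball xs σ) (hxne : x ≠ xs)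
    (M P : EuclideanSpace ℝ (Fin n) →L[ℝ] EuclideanSpace ℝ (Fin n))
    (hP : IsUnit P)
    (hM1 : ‖(Ring.inverse M).comp (F' x)‖ ≤ ω₁)
    (hM2 : ‖(Ring.inverse M).comp (F' x) - 1‖ ≤ ω₂)
    (η : ℝ) (hη : 0 ≤ η) (r : EuclideanSpace ℝ (Fin n))
    (hres : ‖P r‖ ≤ η * ‖P (F x)‖)
    (hcond : η * (‖Ring.inverse (P.comp (F' x))‖ * ‖P.comp (F' x)‖) ≤ ϑ)
    (θ : ℝ) (hθ : θ ≤ lam ^ 2 / 2)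
    (xp : EuclideanSpace ℝ (Fin n))
    (hxp : ‖xp - xs‖ ≤ ‖x - (Ring.inverse M) (F x - r) - xs‖
        + Real.sqrt (2 * θ) * ‖(Ring.inverse M) (F x - r)‖) :
    ‖xp - xs‖ ≤
      ω₁ * (1 + ϑ) * (1 + Real.sqrt (2 * θ))
          * |‖x - xs‖ - f ‖x - xs‖ / f' ‖x - xs‖|
        + (ω₁ * ((1 + ϑ) * Real.sqrt (2 * θ) + ϑ) + ω₂) * ‖x - xs‖ ∧
      ω₁ * (1 + ϑ) * (1 + Real.sqrt (2 * θ))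
          * |‖x - xs‖ - f ‖x - xs‖ / f' ‖x - xs‖|
        + (ω₁ * ((1 + ϑ) * Real.sqrt (2 * θ) + ϑ) + ω₂) * ‖x - xs‖ < ‖x - xs‖ := by
  set t := ‖x - xs‖
  have ht0 : 0 < t := norm_pos_iff.mpr (sub_ne_zero.mpr hxne)
  have htσ : t < σ := mem_ball_iff_norm.mp hx.2
  have htκ : t < κ := htσ.trans_le (hσ ▸ min_le_left κ ρ)
  obtain ⟨δ, ⟨hδν, hkey⟩, htδ⟩ :=
    Real.exists_mem_lt_of_lt_sSup ht0.le (hρ ▸ htσ.trans_le (hσ ▸ min_le_right κ ρ))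
  obtain ⟨s, ⟨hsR, hfs⟩, hts⟩ := Real.exists_mem_lt_of_lt_sSup ht0.le (hν ▸ htδ.trans hδν.2)
  obtain ⟨t', ⟨-, hballΩ⟩, htt'⟩ := Real.exists_mem_lt_of_lt_sSup ht0.le (hκ ▸ htκ)
  have htR : t < R := hts.trans hsR.2
  have hf't : f' t < 0 := (h2 ⟨ht0.le, htR⟩ hsR hts).trans hfs
  have hsegΩ : ∀ τ ∈ Set.Icc (0 : ℝ) 1, xs + τ • (x - xs) ∈ Ω := fun τ hτ =>
    hballΩ ((convex_ball xs t').add_smul_sub_mem (Metric.mem_ball_self (ht0.trans htt'))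
      (mem_ball_iff_norm.mpr htt') hτ)
  obtain ⟨hT, hnewton⟩ := isUnit_and_norm_newton_error_le_of_majorant hinv hFxs
    (fun τ hτ => hFderiv _ (hsegΩ τ hτ)) hderiv h1a h1b htR hf't
    (fun τ hτ => hmaj τ hτ x (mem_ball_iff_norm.mpr htκ))
  have he0 : 0 ≤ f t / f' t - t := (norm_nonneg _).trans hnewton
  have hc : Real.sqrt (2 * θ) ≤ lam := Real.sqrt_le_iff.mpr ⟨hlam0, by linarith⟩
  have hstep := ContinuousLinearMap.norm_inexact_newton_step_le hT hM1 hM2 hnewton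
    (ContinuousLinearMap.norm_ringInverse_apply_le_of_precond hT hP hη hres hcond) hϑ0
    (Real.sqrt_nonneg (2 * θ))
  rw [abs_sub_comm, abs_of_nonneg he0]
  refine ⟨hxp.trans (sub_right_comm x _ xs ▸ hstep),
    newton_error_bound_lt_self ((norm_nonneg _).trans hM1) hϑ0 ht0 he0 hc ?_⟩
  have hratio : (f t / f' t - t) / t = f t / (t * f' t) - 1 := by field_simp [hf't.ne]
  exact hratio ▸ hkey t ⟨ht0, htδ⟩

theorem stmt_9 (n : ℕ) (Ω : Set (EuclideanSpace ℝ (Fin n))) (hΩ : IsOpen Ω)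
    (C : Set (EuclideanSpace ℝ (Fin n))) (hCne : C.Nonempty)
    (hCconv : Convex ℝ C) (hCcomp : IsCompact C) (hCΩ : C ⊆ Ω)
    (F : EuclideanSpace ℝ (Fin n) → EuclideanSpace ℝ (Fin n))
    (F' : EuclideanSpace ℝ (Fin n) →
      (EuclideanSpace ℝ (Fin n) →L[ℝ] EuclideanSpace ℝ (Fin n)))
    (hFderiv : ∀ x ∈ Ω, HasFDerivAt F (F' x) x)
    (hFcont : ContinuousOn F' Ω)
    (xs : EuclideanSpace ℝ (Fin n)) (hxsC : xs ∈ C) (hFxs : F xs = 0)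
    (hinv : IsUnit (F' xs))
    (R : ℝ) (hR : 0 < R)
    (κ : ℝ) (hκ : κ = sSup {t | t ∈ Set.Ico 0 R ∧ Metric.ball xs t ⊆ Ω})
    (f f' : ℝ → ℝ)
    (hderiv : ∀ t ∈ Set.Ico 0 R, HasDerivWithinAt f (f' t) (Set.Ico 0 R) t)
    (hcont : ContinuousOn f' (Set.Ico 0 R))
    (h1a : f 0 = 0) (h1b : f' 0 = -1)
    (h2 : StrictMonoOn f' (Set.Ico 0 R))
    (hmaj : ∀ τ ∈ Set.Icc (0:ℝ) 1, ∀ x ∈ Metric.ball xs κ,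
      ‖(Ring.inverse (F' xs)).comp (F' x - F' (xs + τ • (x - xs)))‖ ≤
        f' ‖x - xs‖ - f' (τ * ‖x - xs‖))
    (ν : ℝ) (hν : ν = sSup {t | t ∈ Set.Ico 0 R ∧ f' t < 0})
    (ϑ ω₁ ω₂ lam : ℝ)
    (hϑ0 : 0 ≤ ϑ) (hϑ1 : ϑ < 1) (hω₂0 : 0 ≤ ω₂) (hω₁₂ : ω₂ < ω₁)
    (hωϑ : ω₁ * ϑ + ω₂ < 1)
    (hlam0 : 0 ≤ lam) (hlam : lam < (1 - ω₂ - ω₁ * ϑ) / (ω₁ * (1 + ϑ)))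
    (ρ : ℝ)
    (hρ : ρ = sSup {δ | δ ∈ Set.Ioo 0 ν ∧ ∀ t ∈ Set.Ioo 0 δ,
      ω₁ * (1 + ϑ) * (1 + lam) * (f t / (t * f' t) - 1)
        + ω₁ * ((1 + ϑ) * lam + ϑ) + ω₂ < 1})
    (σ : ℝ) (hσ : σ = min κ ρ)
    (x : EuclideanSpace ℝ (Fin n)) (hx : x ∈ C ∩ Metric.ball xs σ) (hxne : x ≠ xs)
    (M P : EuclideanSpace ℝ (Fin n) →L[ℝ] EuclideanSpace ℝ (Fin n))
    (hM : IsUnit M) (hP : IsUnit P)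
    (hM1 : ‖(Ring.inverse M).comp (F' x)‖ ≤ ω₁)
    (hM2 : ‖(Ring.inverse M).comp (F' x) - 1‖ ≤ ω₂)
    (η : ℝ) (hη : 0 ≤ η) (r : EuclideanSpace ℝ (Fin n))
    (hres : ‖P r‖ ≤ η * ‖P (F x)‖)
    (hcond : η * (‖Ring.inverse (P.comp (F' x))‖ * ‖P.comp (F' x)‖) ≤ ϑ)
    (θ : ℝ) (hθ0 : 0 ≤ θ) (hθ : θ ≤ lam ^ 2 / 2)
    (xp : EuclideanSpace ℝ (Fin n)) (hxpC : xp ∈ C)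
    (hxp : ‖xp - xs‖ ≤ ‖x - (Ring.inverse M) (F x - r) - xs‖
        + Real.sqrt (2 * θ) * ‖(Ring.inverse M) (F x - r)‖) :
    ‖xp - xs‖ ≤
      ω₁ * (1 + ϑ) * (1 + Real.sqrt (2 * θ))
          * |‖x - xs‖ - f ‖x - xs‖ / f' ‖x - xs‖|
        + (ω₁ * ((1 + ϑ) * Real.sqrt (2 * θ) + ϑ) + ω₂) * ‖x - xs‖ ∧
      ω₁ * (1 + ϑ) * (1 + Real.sqrt (2 * θ))
          * |‖x - xs‖ - f ‖x - xs‖ / f' ‖x - xs‖|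
        + (ω₁ * ((1 + ϑ) * Real.sqrt (2 * θ) + ϑ) + ω₂) * ‖x - xs‖ < ‖x - xs‖ :=
  stmt_9_general n Ω C F F' hFderiv xs hFxs hinv R κ hκ f f' hderiv h1a h1b h2 hmaj ν hν ϑ ω₁ ω₂ lam
    hϑ0 hlam0 ρ hρ σ hσ x hx hxne M P hP hM1 hM2 η hη r hres hcond θ hθ xp hxp
end

section
/- In the majorant setting, with the INL-CondG sequence assumptions, {θ_k} ⊂ [0, λ²/2], x₀ ∈ C ∩ B(x*, σ), x₀ ≠ x*, assume additionally there is p ∈ (0, 1] such that the function t ↦ [f(t)/f'(t) − t]/t^{p+1} is strictly increasing on (0, ν). Then for all integers k ≥ 0: ‖x_{k+1} − x*‖ ≤ ω₁(1+ϑ)(1+λ)·(f(‖x₀ − x*‖)/f'(‖x₀ − x*‖) − ‖x₀ − x*‖)·(‖x_k − x*‖/‖x₀ − x*‖)^{p+1} + (ω₁[(1+ϑ)λ + ϑ] + ω₂)‖x_k − x*‖. -/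
/-!
Under the majorant condition, the Banach perturbation lemma and the integral form of Taylor's
theorem show that at distance `t < ν` from `x*` the Jacobian `F'(x)` is invertible and the exact
Newton step lands within `e(t) := f(t)/f'(t) - t` of `x*`. The inexact step differs from the
Newton step in a controlled way: the preconditioned Jacobian `M⁻¹F'(x)` has norm at most `ω₁` and
is `ω₂`-close to the identity, the condition-number bound turns the relative residual into
`‖F'(x)⁻¹r‖ ≤ ϑ‖F'(x)⁻¹F(x)‖`, and the conditional-gradient correction costs at most `λ‖s‖`.
Hence `‖x_{k+1} - x*‖ ≤ a e(t_k) + b t_k`. Monotonicity of `e(t)/t^{p+1}` gives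
`e(t_k) ≤ e(t₀)(t_k/t₀)^{p+1}`, and the choice of `ρ` gives `a e(t₀)/t₀ + b < 1`, so by induction
no iterate leaves the ball of radius `t₀` on which these estimates hold.
-/

open Set Metric MeasureTheory

namespace ContinuousLinearMap

section RingInverse

variable {R M : Type*} [Semiring R] [TopologicalSpace M] [AddCommMonoid M] [Module R M]
  {A : M →L[R] M}

theorem ringInverse_apply_apply_s12 (hA : IsUnit A) (v : M) : Ring.inverse A (A v) = v := by
  rw [← mul_apply_eq_comp, Ring.inverse_mul_cancel _ hA, one_apply_eq_self]

theorem apply_ringInverse_apply_s12 (hA : IsUnit A) (v : M) : A (Ring.inverse A v) = v := by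
  rw [← mul_apply_eq_comp, Ring.mul_inverse_cancel _ hA, one_apply_eq_self]

end RingInverse

section Banach

variable {𝕜 E : Type*} [NontriviallyNormedField 𝕜] [NormedAddCommGroup E] [NormedSpace 𝕜 E]
  [CompleteSpace E]

theorem isUnit_and_norm_inverse_mul_le {A B : E →L[𝕜] E} (hA : IsUnit A)
    (h : ‖Ring.inverse A * B - 1‖ < 1) :
    IsUnit B ∧ ‖Ring.inverse B * A‖ ≤ (1 - ‖Ring.inverse A * B - 1‖)⁻¹ := by
  obtain ⟨a, rfl⟩ := hA
  set D := 1 - Ring.inverse (a : E →L[𝕜] E) * B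
  have hD : ‖Ring.inverse (a : E →L[𝕜] E) * B - 1‖ = ‖D‖ := norm_sub_rev _ _
  rw [hD] at h ⊢
  set u := Units.oneSub D h
  have hB : ((a * u : (E →L[𝕜] E)ˣ) : E →L[𝕜] E) = B := by
    simp [u, D, ← mul_assoc]
  refine ⟨hB ▸ (a * u).isUnit, ?_⟩
  have hinv : Ring.inverse B * a = ∑' n : ℕ, D ^ n := by
    rw [geom_series_eq_inverse D h, NormedRing.inverse_one_sub D h, ← hB, Ring.inverse_unit]
    simp [u, mul_assoc]
  have h1 : ‖(1 : E →L[𝕜] E)‖ ≤ 1 := norm_id_le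
  rw [hinv]
  linarith [tsum_geometric_le_of_norm_lt_one D h]

end Banach

end ContinuousLinearMap

theorem Real.exists_mem_lt_of_nonneg_lt_sSup {S : Set ℝ} {a : ℝ} (ha : 0 ≤ a)
    (h : a < sSup S) : ∃ b ∈ S, a < b := by
  rcases S.eq_empty_or_nonempty with rfl | hS
  · rw [Real.sSup_empty] at h
    exact absurd h ha.not_gt
  · exact exists_lt_of_lt_csSup hS h

theorem le_mul_div_rpow_of_monotoneOn {e : ℝ → ℝ} {ν t t₀ q : ℝ}
    (he : MonotoneOn (fun t => e t / t ^ q) (Ioo 0 ν)) (he0 : e 0 = 0) (hq : 0 < q)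
    (ht : 0 ≤ t) (htt₀ : t ≤ t₀) (ht₀ν : t₀ < ν) : e t ≤ e t₀ * (t / t₀) ^ q := by
  rcases ht.eq_or_lt with rfl | ht
  · simp [he0, Real.zero_rpow hq.ne']
  have ht₀ : 0 < t₀ := ht.trans_le htt₀
  have h := he ⟨ht, htt₀.trans_lt ht₀ν⟩ ⟨ht₀, ht₀ν⟩ htt₀
  rw [div_le_div_iff₀ (Real.rpow_pos_of_pos ht q) (Real.rpow_pos_of_pos ht₀ q)] at h
  rwa [Real.div_rpow ht.le ht₀.le, ← mul_div_assoc,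
    le_div_iff₀ (Real.rpow_pos_of_pos ht₀ q)]

theorem forall_le_of_step_le_rpow {u : ℕ → ℝ} {a b t₀ q : ℝ} (hu : ∀ k, 0 ≤ u k)
    (ha : 0 ≤ a) (ht₀ : 0 < t₀) (hq : 1 ≤ q) (hab : a / t₀ + b ≤ 1) (h0 : u 0 ≤ t₀)
    (hstep : ∀ k, u k ≤ t₀ → u (k + 1) ≤ a * (u k / t₀) ^ q + b * u k) :
    ∀ k, u k ≤ t₀ := by
  intro k
  induction k with
  | zero => exact h0
  | succ k ih =>
    have hpow : (u k / t₀) ^ q ≤ u k / t₀ :=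
      Real.rpow_le_self_of_le_one (div_nonneg (hu k) ht₀.le) ((div_le_one ht₀).2 ih) hq
    calc u (k + 1) ≤ a * (u k / t₀) + b * u k :=
          (hstep k ih).trans (by gcongr)
      _ = (a / t₀ + b) * u k := by ring
      _ ≤ 1 * u k := by gcongr; exact hu k
      _ ≤ t₀ := by rwa [one_mul]

theorem forall_step_le_rpow {u : ℕ → ℝ} {g : ℝ → ℝ} {a b t₀ q : ℝ} (hu : ∀ k, 0 ≤ u k)
    (ha : 0 ≤ a) (ht₀ : 0 < t₀) (hq : 1 ≤ q) (hg : ∀ t ∈ Icc 0 t₀, g t ≤ g t₀ * (t / t₀) ^ q)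
    (hg₀ : 0 ≤ g t₀) (hab : a * g t₀ / t₀ + b ≤ 1) (h0 : u 0 ≤ t₀)
    (hstep : ∀ k, u k ≤ t₀ → u (k + 1) ≤ a * g (u k) + b * u k) :
    ∀ k, u (k + 1) ≤ a * g t₀ * (u k / t₀) ^ q + b * u k := by
  have hstep' : ∀ k, u k ≤ t₀ → u (k + 1) ≤ a * g t₀ * (u k / t₀) ^ q + b * u k :=
    fun k hk => (hstep k hk).trans <| by
      rw [mul_assoc]; gcongr; exact hg _ ⟨hu k, hk⟩
  exact fun k => hstep' k
    (forall_le_of_step_le_rpow hu (by positivity) ht₀ hq hab h0 hstep' k)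

theorem Metric.ball_sSup_subset {α : Type*} [PseudoMetricSpace α] {x : α} {S : Set ℝ}
    {Ω : Set α} (h : ∀ t ∈ S, ball x t ⊆ Ω) : ball x (sSup S) ⊆ Ω := fun y hy => by
  obtain ⟨t, ht, hyt⟩ := Real.exists_mem_lt_of_nonneg_lt_sSup dist_nonneg (mem_ball.1 hy)
  exact h t ht hyt

theorem lt_and_neg_of_lt_sSup_neg {f' : ℝ → ℝ} {R t : ℝ} (hf' : MonotoneOn f' (Ico 0 R))
    (ht : 0 ≤ t) (htν : t < sSup {t | t ∈ Ico 0 R ∧ f' t < 0}) : t < R ∧ f' t < 0 := by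
  obtain ⟨t', ⟨ht'R, ht'⟩, htt'⟩ := Real.exists_mem_lt_of_nonneg_lt_sSup ht htν
  have htR : t < R := htt'.trans ht'R.2
  exact ⟨htR, (hf' ⟨ht, htR⟩ ht'R htt'.le).trans_lt ht'⟩

theorem integral_deriv_sub_deriv_comp_mul_mul {f f' : ℝ → ℝ} {R t : ℝ}
    (hf : ∀ u ∈ Ico 0 R, HasDerivWithinAt f (f' u) (Ico 0 R) u)
    (hf'c : ContinuousOn f' (Ico 0 R)) (ht : 0 < t) (htR : t < R) :
    (∫ τ in (0 : ℝ)..1, (f' t - f' (τ * t))) * t = t * f' t - (f t - f 0) := by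
  have hsub : Icc 0 t ⊆ Ico 0 R := Icc_subset_Ico le_rfl htR
  have hFTC : ∫ u in (0 : ℝ)..t, f' u = f t - f 0 :=
    intervalIntegral.integral_eq_sub_of_hasDeriv_right_of_le ht.le
      (fun u hu => (hf u (hsub hu)).continuousWithinAt.mono hsub)
      (fun u hu => ((hf u ⟨hu.1.le, hu.2.trans htR⟩).hasDerivAt
        (Ico_mem_nhds hu.1 (hu.2.trans htR))).hasDerivWithinAt)
      ((hf'c.mono hsub).intervalIntegrable_of_Icc ht.le)
  have hint : IntervalIntegrable (fun τ => f' (τ * t)) volume 0 1 := by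
    refine ContinuousOn.intervalIntegrable_of_Icc zero_le_one (hf'c.comp (by fun_prop) ?_)
    intro τ hτ
    exact ⟨mul_nonneg hτ.1 ht.le, (mul_le_of_le_one_left ht.le hτ.2).trans_lt htR⟩
  rw [intervalIntegral.integral_sub intervalIntegrable_const hint,
    intervalIntegral.integral_comp_mul_right f' ht.ne', zero_mul, one_mul, hFTC,
    intervalIntegral.integral_const, smul_eq_mul, smul_eq_mul, sub_zero, one_mul]
  field_simp

section Taylor

variable {E E₂ : Type*} [NormedAddCommGroup E] [NormedSpace ℝ E] [NormedAddCommGroup E₂]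
  [NormedSpace ℝ E₂] [CompleteSpace E₂] {Ω : Set E} {F : E → E₂} {F' : E → E →L[ℝ] E₂}
  {a x : E} {φ : ℝ → ℝ}

theorem norm_fderiv_apply_sub_sub_le_integral (hF : ∀ y ∈ Ω, HasFDerivAt F (F' y) y)
    (hF'c : ContinuousOn F' Ω) (hseg : segment ℝ a x ⊆ Ω)
    (hφ : IntervalIntegrable φ volume 0 1)
    (hb : ∀ τ ∈ Icc (0 : ℝ) 1, ‖F' x - F' (a + τ • (x - a))‖ ≤ φ τ) :
    ‖F' x (x - a) - (F x - F a)‖ ≤ (∫ τ in (0 : ℝ)..1, φ τ) * ‖x - a‖ := by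
  set γ : ℝ → E := fun τ => a + τ • (x - a)
  have hγΩ : ∀ τ ∈ Icc (0 : ℝ) 1, γ τ ∈ Ω := fun τ hτ =>
    hseg (segment_eq_image' ℝ a x ▸ mem_image_of_mem γ hτ)
  have hγ' : ∀ τ, HasDerivAt γ (x - a) τ := fun τ => by
    simpa only [one_smul] using ((hasDerivAt_id' τ).smul_const (x - a)).const_add a
  have hF'γ : ContinuousOn (fun τ => F' (γ τ)) (Icc 0 1) :=
    hF'c.comp (by fun_prop) hγΩ
  have hint : IntervalIntegrable (fun τ => F' (γ τ) (x - a)) volume 0 1 :=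
    (hF'γ.clm_apply continuousOn_const).intervalIntegrable_of_Icc zero_le_one
  have hFTC : ∫ τ in (0 : ℝ)..1, F' (γ τ) (x - a) = F x - F a := by
    rw [intervalIntegral.integral_eq_sub_of_hasDerivAt (f := F ∘ γ) (fun τ hτ => ?_) hint]
    · simp [γ]
    · rw [uIcc_of_le zero_le_one] at hτ
      exact (hF _ (hγΩ τ hτ)).comp_hasDerivAt τ (hγ' τ)
  have hrem : F' x (x - a) - (F x - F a) = ∫ τ in (0 : ℝ)..1, (F' x - F' (γ τ)) (x - a) := by
    simp only [sub_apply]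
    rw [intervalIntegral.integral_sub intervalIntegrable_const hint, hFTC]
    simp
  rw [hrem, ← intervalIntegral.integral_mul_const]
  refine intervalIntegral.norm_integral_le_of_norm_le zero_le_one
    (ae_of_all _ fun τ hτ => ?_) (hφ.mul_const _)
  exact (ContinuousLinearMap.le_opNorm _ _).trans
    (by gcongr; exact hb τ (Ioc_subset_Icc_self hτ))

end Taylor

section Majorant

variable {E : Type*} [NormedAddCommGroup E] [NormedSpace ℝ E] [CompleteSpace E]
  {Ω : Set E} {F : E → E} {F' : E → E →L[ℝ] E} {xs x : E} {κ R : ℝ} {f f' : ℝ → ℝ}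

def MajorantCondition (F' : E → E →L[ℝ] E) (xs : E) (κ : ℝ) (f' : ℝ → ℝ) : Prop :=
  ∀ τ ∈ Icc (0 : ℝ) 1, ∀ x ∈ ball xs κ,
    ‖(Ring.inverse (F' xs)).comp (F' x - F' (xs + τ • (x - xs)))‖ ≤
      f' ‖x - xs‖ - f' (τ * ‖x - xs‖)

theorem MajorantCondition.isUnit_and_norm_inverse_mul_le (hmaj : MajorantCondition F' xs κ f')
    (hinv : IsUnit (F' xs)) (hf'0 : f' 0 = -1) (hx : x ∈ ball xs κ)
    (hf'x : f' ‖x - xs‖ < 0) :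
    IsUnit (F' x) ∧ ‖Ring.inverse (F' x) * F' xs‖ ≤ (-f' ‖x - xs‖)⁻¹ := by
  have h0 := hmaj 0 ⟨le_rfl, zero_le_one⟩ x hx
  rw [zero_smul, add_zero, zero_mul, hf'0, ← ContinuousLinearMap.mul_def, mul_sub,
    Ring.inverse_mul_cancel _ hinv] at h0
  obtain ⟨hunit, hnorm⟩ :=
    ContinuousLinearMap.isUnit_and_norm_inverse_mul_le hinv (h0.trans_lt (by linarith))
  exact ⟨hunit, hnorm.trans (inv_anti₀ (by linarith) (by linarith))⟩

theorem MajorantCondition.norm_inverse_taylor_remainder_le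
    (hmaj : MajorantCondition F' xs κ f') (hF : ∀ y ∈ Ω, HasFDerivAt F (F' y) y)
    (hF'c : ContinuousOn F' Ω) (hball : ball xs κ ⊆ Ω)
    (hf : ∀ t ∈ Ico 0 R, HasDerivWithinAt f (f' t) (Ico 0 R) t)
    (hf'c : ContinuousOn f' (Ico 0 R)) (hx : x ∈ ball xs κ) (hxR : ‖x - xs‖ < R)
    (hxxs : 0 < ‖x - xs‖) :
    ‖Ring.inverse (F' xs) (F' x (x - xs) - (F x - F xs))‖ ≤
      ‖x - xs‖ * f' ‖x - xs‖ - (f ‖x - xs‖ - f 0) := by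
  set G := Ring.inverse (F' xs)
  set t := ‖x - xs‖
  have hmem : ∀ τ ∈ Icc (0 : ℝ) 1, τ * t ∈ Ico 0 R := fun τ hτ =>
    ⟨mul_nonneg hτ.1 hxxs.le, (mul_le_of_le_one_left hxxs.le hτ.2).trans_lt hxR⟩
  have hφ : IntervalIntegrable (fun τ => f' t - f' (τ * t)) volume 0 1 :=
    (continuousOn_const.sub (hf'c.comp (by fun_prop) hmem)).intervalIntegrable_of_Icc
      zero_le_one
  have hseg : segment ℝ xs x ⊆ Ω :=
    ((convex_ball xs κ).segment_subset (mem_ball_self (pos_of_mem_ball hx)) hx).trans hball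
  have h := norm_fderiv_apply_sub_sub_le_integral (F := fun y => G (F y))
    (F' := fun y => G.comp (F' y)) (fun y hy => G.hasFDerivAt.comp y (hF y hy))
    (continuousOn_const.clm_comp hF'c) hseg hφ (fun τ hτ => by
      rw [← ContinuousLinearMap.comp_sub]; exact hmaj τ hτ x hx)
  simp only [ContinuousLinearMap.comp_apply, ← map_sub] at h
  rwa [integral_deriv_sub_deriv_comp_mul_mul hf hf'c hxxs hxR] at h

theorem MajorantCondition.norm_sub_sub_newton_le (hmaj : MajorantCondition F' xs κ f')
    (hF : ∀ y ∈ Ω, HasFDerivAt F (F' y) y) (hF'c : ContinuousOn F' Ω)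
    (hball : ball xs κ ⊆ Ω) (hFxs : F xs = 0) (hinv : IsUnit (F' xs))
    (hf : ∀ t ∈ Ico 0 R, HasDerivWithinAt f (f' t) (Ico 0 R) t)
    (hf'c : ContinuousOn f' (Ico 0 R)) (hf0 : f 0 = 0) (hf'0 : f' 0 = -1)
    (hx : x ∈ ball xs κ) (hxR : ‖x - xs‖ < R) (hf'x : f' ‖x - xs‖ < 0) :
    IsUnit (F' x) ∧
      ‖x - xs - Ring.inverse (F' x) (F x)‖ ≤ f ‖x - xs‖ / f' ‖x - xs‖ - ‖x - xs‖ := by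
  obtain ⟨hunit, hnorm⟩ := hmaj.isUnit_and_norm_inverse_mul_le hinv hf'0 hx hf'x
  refine ⟨hunit, ?_⟩
  rcases (norm_nonneg (x - xs)).eq_or_lt with hxxs | hxxs
  · obtain rfl : x = xs := sub_eq_zero.1 (norm_eq_zero.1 hxxs.symm)
    simp [hFxs, hf0]
  have hrem := hmaj.norm_inverse_taylor_remainder_le hF hF'c hball hf hf'c hx hxR hxxs
  have hid : x - xs - Ring.inverse (F' x) (F x) = (Ring.inverse (F' x) * F' xs)
      (Ring.inverse (F' xs) (F' x (x - xs) - (F x - F xs))) := by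
    rw [mul_apply_eq_comp, ContinuousLinearMap.apply_ringInverse_apply_s12 hinv, map_sub,
      ContinuousLinearMap.ringInverse_apply_apply_s12 hunit, hFxs, sub_zero]
  calc ‖x - xs - Ring.inverse (F' x) (F x)‖
      ≤ (-f' ‖x - xs‖)⁻¹ * (‖x - xs‖ * f' ‖x - xs‖ - (f ‖x - xs‖ - f 0)) := by
        rw [hid]
        exact (ContinuousLinearMap.le_opNorm _ _).trans
          (mul_le_mul hnorm hrem (norm_nonneg _) (inv_nonneg.2 (by linarith)))
    _ = f ‖x - xs‖ / f' ‖x - xs‖ - ‖x - xs‖ := by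
        rw [hf0, sub_zero]
        field_simp [hf'x.ne]
        ring

end Majorant

section InexactStep

open ContinuousLinearMap

variable {𝕜 E : Type*} [NontriviallyNormedField 𝕜] [NormedAddCommGroup E] [NormedSpace 𝕜 E]
  {A M P : E →L[𝕜] E} {e y r s : E} {η θ ϑ lam ω₁ ω₂ d : ℝ}

theorem norm_ringInverse_apply_le_of_preconditioned (hA : IsUnit A) (hP : IsUnit P)
    (hη : 0 ≤ η) (hres : ‖P r‖ ≤ η * ‖P y‖)
    (hcond : η * (‖Ring.inverse (P.comp A)‖ * ‖P.comp A‖) ≤ ϑ) :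
    ‖Ring.inverse A r‖ ≤ ϑ * ‖Ring.inverse A y‖ := by
  have hPA : IsUnit (P.comp A) := hP.mul hA
  have hr : Ring.inverse A r = Ring.inverse (P.comp A) (P r) := by
    conv_lhs => rw [← ringInverse_apply_apply_s12 hPA (Ring.inverse A r)]
    rw [comp_apply, apply_ringInverse_apply_s12 hA]
  have hy : P y = P.comp A (Ring.inverse A y) := by
    rw [comp_apply, apply_ringInverse_apply_s12 hA]
  calc ‖Ring.inverse A r‖ ≤ ‖Ring.inverse (P.comp A)‖ * (η * ‖P y‖) := by
        rw [hr]; exact (le_opNorm _ _).trans (by gcongr)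
    _ ≤ ‖Ring.inverse (P.comp A)‖ * (η * (‖P.comp A‖ * ‖Ring.inverse A y‖)) := by
        rw [hy]; gcongr; exact le_opNorm _ _
    _ = η * (‖Ring.inverse (P.comp A)‖ * ‖P.comp A‖) * ‖Ring.inverse A y‖ := by ring
    _ ≤ ϑ * ‖Ring.inverse A y‖ := by gcongr

theorem inexact_step_eq (hA : IsUnit A) (hM : IsUnit M) (hs : M s = -y + r) :
    s = (Ring.inverse M).comp A (Ring.inverse A r - Ring.inverse A y) := by
  rw [comp_apply, map_sub, apply_ringInverse_apply_s12 hA, apply_ringInverse_apply_s12 hA,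
    ← ringInverse_apply_apply_s12 hM s, hs]
  abel_nf

theorem norm_add_inexact_step_le (hA : IsUnit A) (hM : IsUnit M) (hP : IsUnit P)
    (hs : M s = -y + r) (hM₁ : ‖(Ring.inverse M).comp A‖ ≤ ω₁)
    (hM₂ : ‖(Ring.inverse M).comp A - 1‖ ≤ ω₂) (hη : 0 ≤ η) (hres : ‖P r‖ ≤ η * ‖P y‖)
    (hcond : η * (‖Ring.inverse (P.comp A)‖ * ‖P.comp A‖) ≤ ϑ) (hϑ : 0 ≤ ϑ)
    (hd : ‖e - Ring.inverse A y‖ ≤ d) (hlam : 0 ≤ lam) (hθ : θ ∈ Icc 0 (lam ^ 2 / 2)) :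
    ‖e + s‖ + √(2 * θ) * ‖s‖ ≤
      ω₁ * (1 + ϑ) * (1 + lam) * d + (ω₁ * ((1 + ϑ) * lam + ϑ) + ω₂) * ‖e‖ := by
  set T := (Ring.inverse M).comp A
  set w := Ring.inverse A y
  have hω₁ : 0 ≤ ω₁ := (norm_nonneg _).trans hM₁
  have hr := norm_ringInverse_apply_le_of_preconditioned hA hP hη hres hcond
  have hs' := inexact_step_eq hA hM hs
  have hw : ‖w‖ ≤ ‖e‖ + d := by
    calc ‖w‖ = ‖e - (e - w)‖ := by rw [sub_sub_cancel]
      _ ≤ ‖e‖ + d := (norm_sub_le _ _).trans (by gcongr)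
  have hsn : ‖s‖ ≤ ω₁ * (1 + ϑ) * ‖w‖ := by
    calc ‖s‖ ≤ ω₁ * (‖Ring.inverse A r‖ + ‖w‖) := by
          rw [hs']; exact (le_opNorm _ _).trans (by gcongr; exact norm_sub_le _ _)
      _ ≤ ω₁ * (ϑ * ‖w‖ + ‖w‖) := by gcongr
      _ = ω₁ * (1 + ϑ) * ‖w‖ := by ring
  have hes : ‖e + s‖ ≤ ω₂ * ‖e‖ + ω₁ * d + ω₁ * ϑ * ‖w‖ := by
    -- mismatch of the preconditioned Jacobian, error of the exact Newton step, residual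
    have : e + s = -((T - 1) e) + T (e - w) + T (Ring.inverse A r) := by
      rw [hs']; simp only [sub_apply, one_apply_eq_self, map_sub]; abel
    rw [this]
    refine (norm_add₃_le ..).trans ?_
    rw [norm_neg]
    gcongr
    · exact (le_opNorm _ _).trans (by gcongr)
    · exact (le_opNorm _ _).trans (by gcongr)
    · exact (le_opNorm _ _).trans (by rw [mul_assoc]; gcongr)
  have hsqrt : √(2 * θ) ≤ lam := Real.sqrt_le_iff.2 ⟨hlam, by linarith [hθ.2]⟩
  calc ‖e + s‖ + √(2 * θ) * ‖s‖
      ≤ ω₂ * ‖e‖ + ω₁ * d + ω₁ * ϑ * ‖w‖ + lam * (ω₁ * (1 + ϑ) * ‖w‖) := by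
        gcongr
    _ ≤ ω₂ * ‖e‖ + ω₁ * d + ω₁ * ϑ * (‖e‖ + d) + lam * (ω₁ * (1 + ϑ) * (‖e‖ + d)) := by
        gcongr
    _ = _ := by ring

end InexactStep

theorem stmt_12_general (n : ℕ) (Ω : Set (EuclideanSpace ℝ (Fin n)))
    (C : Set (EuclideanSpace ℝ (Fin n)))
    (F : EuclideanSpace ℝ (Fin n) → EuclideanSpace ℝ (Fin n))
    (F' : EuclideanSpace ℝ (Fin n) →
      (EuclideanSpace ℝ (Fin n) →L[ℝ] EuclideanSpace ℝ (Fin n)))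
    (hFderiv : ∀ x ∈ Ω, HasFDerivAt F (F' x) x)
    (hFcont : ContinuousOn F' Ω)
    (xs : EuclideanSpace ℝ (Fin n)) (hFxs : F xs = 0)
    (hinv : IsUnit (F' xs))
    (R : ℝ)
    (κ : ℝ) (hκ : κ = sSup {t | t ∈ Set.Ico 0 R ∧ Metric.ball xs t ⊆ Ω})
    (f f' : ℝ → ℝ)
    (hderiv : ∀ t ∈ Set.Ico 0 R, HasDerivWithinAt f (f' t) (Set.Ico 0 R) t)
    (hcont : ContinuousOn f' (Set.Ico 0 R))
    (h1a : f 0 = 0) (h1b : f' 0 = -1)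
    (h2 : StrictMonoOn f' (Set.Ico 0 R))
    (hmaj : ∀ τ ∈ Set.Icc (0:ℝ) 1, ∀ x ∈ Metric.ball xs κ,
      ‖(Ring.inverse (F' xs)).comp (F' x - F' (xs + τ • (x - xs)))‖ ≤
        f' ‖x - xs‖ - f' (τ * ‖x - xs‖))
    (ν : ℝ) (hν : ν = sSup {t | t ∈ Set.Ico 0 R ∧ f' t < 0})
    (ϑ ω₁ ω₂ lam : ℝ)
    (hϑ0 : 0 ≤ ϑ) (hω₂0 : 0 ≤ ω₂) (hω₁₂ : ω₂ < ω₁)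
    (hlam0 : 0 ≤ lam)
    (ρ : ℝ)
    (hρ : ρ = sSup {δ | δ ∈ Set.Ioo 0 ν ∧ ∀ t ∈ Set.Ioo 0 δ,
      ω₁ * (1 + ϑ) * (1 + lam) * (f t / (t * f' t) - 1)
        + ω₁ * ((1 + ϑ) * lam + ϑ) + ω₂ < 1})
    (σ : ℝ) (hσ : σ = min κ ρ)
    (x s r : ℕ → EuclideanSpace ℝ (Fin n))
    (M P : ℕ → (EuclideanSpace ℝ (Fin n) →L[ℝ] EuclideanSpace ℝ (Fin n)))
    (η θ : ℕ → ℝ)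
    (hθ : ∀ k, θ k ∈ Set.Icc 0 (lam ^ 2 / 2))
    (hx0 : x 0 ∈ C ∩ Metric.ball xs σ) (hx0ne : x 0 ≠ xs)
    (hM : ∀ k, IsUnit (M k)) (hP : ∀ k, IsUnit (P k)) (hη : ∀ k, 0 ≤ η k)
    (hstep : ∀ k, (M k) (s k) = -F (x k) + r k)
    (hM1 : ∀ k, ‖(Ring.inverse (M k)).comp (F' (x k))‖ ≤ ω₁)
    (hM2 : ∀ k, ‖(Ring.inverse (M k)).comp (F' (x k)) - 1‖ ≤ ω₂)
    (hres : ∀ k, ‖(P k) (r k)‖ ≤ η k * ‖(P k) (F (x k))‖)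
    (hcond : ∀ k, η k * (‖Ring.inverse ((P k).comp (F' (x k)))‖
      * ‖(P k).comp (F' (x k))‖) ≤ ϑ)
    (hcondg : ∀ k, ‖x (k + 1) - xs‖ ≤
      ‖x k + s k - xs‖ + Real.sqrt (2 * θ k) * ‖s k‖)     (p : ℝ) (hp0 : 0 < p)
    (h3 : StrictMonoOn (fun t => (f t / f' t - t) / t ^ (p + 1)) (Set.Ioo 0 ν)) :
    ∀ k, ‖x (k + 1) - xs‖ ≤
      ω₁ * (1 + ϑ) * (1 + lam) * (f ‖x 0 - xs‖ / f' ‖x 0 - xs‖ - ‖x 0 - xs‖)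
          * (‖x k - xs‖ / ‖x 0 - xs‖) ^ (p + 1)
        + (ω₁ * ((1 + ϑ) * lam + ϑ) + ω₂) * ‖x k - xs‖ := by
  set t₀ := ‖x 0 - xs‖
  set e : ℝ → ℝ := fun t => f t / f' t - t
  have ht₀ : 0 < t₀ := norm_pos_iff.2 (sub_ne_zero.2 hx0ne)
  have ht₀σ : t₀ < σ := mem_ball_iff_norm.1 hx0.2
  obtain ⟨δ, ⟨⟨-, hδν⟩, hδ⟩, ht₀δ⟩ := Real.exists_mem_lt_of_nonneg_lt_sSup ht₀.le
    (hρ ▸ ht₀σ.trans_le (hσ ▸ min_le_right κ ρ))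
  have hνR : ∀ t, 0 ≤ t → t ≤ t₀ → t < R ∧ f' t < 0 := fun t ht htt₀ =>
    lt_and_neg_of_lt_sSup_neg h2.monotoneOn ht (hν ▸ htt₀.trans_lt (ht₀δ.trans hδν))
  have hnewton : ∀ k, ‖x k - xs‖ ≤ t₀ → IsUnit (F' (x k)) ∧
      ‖x k - xs - Ring.inverse (F' (x k)) (F (x k))‖ ≤ e ‖x k - xs‖ := fun k hk =>
    MajorantCondition.norm_sub_sub_newton_le hmaj hFderiv hFcont
      (hκ ▸ ball_sSup_subset fun _ ht => ht.2) hFxs hinv hderiv hcont h1a h1b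
      (mem_ball_iff_norm.2 (hk.trans_lt (ht₀σ.trans_le (hσ ▸ min_le_left κ ρ))))
      (hνR _ (norm_nonneg _) hk).1 (hνR _ (norm_nonneg _) hk).2
  have hcontr : ω₁ * (1 + ϑ) * (1 + lam) * e t₀ / t₀ + (ω₁ * ((1 + ϑ) * lam + ϑ) + ω₂) ≤ 1 := by
    have h : f t₀ / (t₀ * f' t₀) - 1 = e t₀ / t₀ := by
      simp only [e]
      field_simp [(hνR t₀ ht₀.le le_rfl).2.ne]
    linarith [mul_div_assoc (ω₁ * (1 + ϑ) * (1 + lam)) (e t₀) t₀, h ▸ hδ t₀ ⟨ht₀, ht₀δ⟩]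
  have he₀ : 0 ≤ e t₀ := (norm_nonneg _).trans (hnewton 0 le_rfl).2
  have hrate : ∀ t ∈ Icc 0 t₀, e t ≤ e t₀ * (t / t₀) ^ (p + 1) := fun t ht =>
    le_mul_div_rpow_of_monotoneOn (e := e) h3.monotoneOn (by simp [e, h1a]) (by linarith) ht.1
      ht.2 (ht₀δ.trans hδν)
  have hω₁ : 0 ≤ ω₁ := hω₂0.trans hω₁₂.le
  refine forall_step_le_rpow (u := fun k => ‖x k - xs‖) (g := e) (fun k => norm_nonneg _)
    (by positivity) ht₀ (by linarith) hrate he₀ hcontr le_rfl fun k hk => ?_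
  obtain ⟨hunit, hN⟩ := hnewton k hk
  calc ‖x (k + 1) - xs‖ ≤ ‖(x k - xs) + s k‖ + √(2 * θ k) * ‖s k‖ := by
        rw [sub_add_eq_add_sub]; exact hcondg k
    _ ≤ _ := norm_add_inexact_step_le hunit (hM k) (hP k) (hstep k) (hM1 k) (hM2 k) (hη k)
        (hres k) (hcond k) hϑ0 hN hlam0 (hθ k)

theorem stmt_12 (n : ℕ) (Ω : Set (EuclideanSpace ℝ (Fin n))) (hΩ : IsOpen Ω)
    (C : Set (EuclideanSpace ℝ (Fin n))) (hCne : C.Nonempty)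
    (hCconv : Convex ℝ C) (hCcomp : IsCompact C) (hCΩ : C ⊆ Ω)
    (F : EuclideanSpace ℝ (Fin n) → EuclideanSpace ℝ (Fin n))
    (F' : EuclideanSpace ℝ (Fin n) →
      (EuclideanSpace ℝ (Fin n) →L[ℝ] EuclideanSpace ℝ (Fin n)))
    (hFderiv : ∀ x ∈ Ω, HasFDerivAt F (F' x) x)
    (hFcont : ContinuousOn F' Ω)
    (xs : EuclideanSpace ℝ (Fin n)) (hxsC : xs ∈ C) (hFxs : F xs = 0)
    (hinv : IsUnit (F' xs))
    (R : ℝ) (hR : 0 < R)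
    (κ : ℝ) (hκ : κ = sSup {t | t ∈ Set.Ico 0 R ∧ Metric.ball xs t ⊆ Ω})
    (f f' : ℝ → ℝ)
    (hderiv : ∀ t ∈ Set.Ico 0 R, HasDerivWithinAt f (f' t) (Set.Ico 0 R) t)
    (hcont : ContinuousOn f' (Set.Ico 0 R))
    (h1a : f 0 = 0) (h1b : f' 0 = -1)
    (h2 : StrictMonoOn f' (Set.Ico 0 R))
    (hmaj : ∀ τ ∈ Set.Icc (0:ℝ) 1, ∀ x ∈ Metric.ball xs κ,
      ‖(Ring.inverse (F' xs)).comp (F' x - F' (xs + τ • (x - xs)))‖ ≤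
        f' ‖x - xs‖ - f' (τ * ‖x - xs‖))
    (ν : ℝ) (hν : ν = sSup {t | t ∈ Set.Ico 0 R ∧ f' t < 0})
    (ϑ ω₁ ω₂ lam : ℝ)
    (hϑ0 : 0 ≤ ϑ) (hϑ1 : ϑ < 1) (hω₂0 : 0 ≤ ω₂) (hω₁₂ : ω₂ < ω₁)
    (hωϑ : ω₁ * ϑ + ω₂ < 1)
    (hlam0 : 0 ≤ lam) (hlam : lam < (1 - ω₂ - ω₁ * ϑ) / (ω₁ * (1 + ϑ)))
    (ρ : ℝ)
    (hρ : ρ = sSup {δ | δ ∈ Set.Ioo 0 ν ∧ ∀ t ∈ Set.Ioo 0 δ,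
      ω₁ * (1 + ϑ) * (1 + lam) * (f t / (t * f' t) - 1)
        + ω₁ * ((1 + ϑ) * lam + ϑ) + ω₂ < 1})
    (σ : ℝ) (hσ : σ = min κ ρ)
    (x s r : ℕ → EuclideanSpace ℝ (Fin n))
    (M P : ℕ → (EuclideanSpace ℝ (Fin n) →L[ℝ] EuclideanSpace ℝ (Fin n)))
    (η θ : ℕ → ℝ)
    (hθ : ∀ k, θ k ∈ Set.Icc 0 (lam ^ 2 / 2))
    (hx0 : x 0 ∈ C ∩ Metric.ball xs σ) (hx0ne : x 0 ≠ xs)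
    (hM : ∀ k, IsUnit (M k)) (hP : ∀ k, IsUnit (P k)) (hη : ∀ k, 0 ≤ η k)
    (hstep : ∀ k, (M k) (s k) = -F (x k) + r k)
    (hM1 : ∀ k, ‖(Ring.inverse (M k)).comp (F' (x k))‖ ≤ ω₁)
    (hM2 : ∀ k, ‖(Ring.inverse (M k)).comp (F' (x k)) - 1‖ ≤ ω₂)
    (hres : ∀ k, ‖(P k) (r k)‖ ≤ η k * ‖(P k) (F (x k))‖)
    (hcond : ∀ k, η k * (‖Ring.inverse ((P k).comp (F' (x k)))‖
      * ‖(P k).comp (F' (x k))‖) ≤ ϑ)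
    (hxC : ∀ k, x (k + 1) ∈ C)
    (hcondg : ∀ k, ‖x (k + 1) - xs‖ ≤
      ‖x k + s k - xs‖ + Real.sqrt (2 * θ k) * ‖s k‖)     (p : ℝ) (hp0 : 0 < p) (hp1 : p ≤ 1)
    (h3 : StrictMonoOn (fun t => (f t / f' t - t) / t ^ (p + 1)) (Set.Ioo 0 ν)) :
    ∀ k, ‖x (k + 1) - xs‖ ≤
      ω₁ * (1 + ϑ) * (1 + lam) * (f ‖x 0 - xs‖ / f' ‖x 0 - xs‖ - ‖x 0 - xs‖)
          * (‖x k - xs‖ / ‖x 0 - xs‖) ^ (p + 1)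
        + (ω₁ * ((1 + ϑ) * lam + ϑ) + ω₂) * ‖x k - xs‖ :=
  stmt_12_general n Ω C F F' hFderiv hFcont xs hFxs hinv R κ hκ f f' hderiv hcont h1a h1b h2 hmaj ν
    hν ϑ ω₁ ω₂ lam hϑ0 hω₂0 hω₁₂ hlam0 ρ hρ σ hσ x s r M P η θ hθ hx0 hx0ne hM hP hη hstep hM1 hM2
    hres hcond hcondg p hp0 h3
end
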